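/- In L_excore, every propagator a : X → Y is provably strongly equal either to a pure term, or to []_Y ∘ tag ∘ v for some pure term v : X → P; moreover every propagator a : X → 0 is strongly equal to tag ∘ v for some pure v : X → P. -/
import Mathlib


/-! The decorated logic for the core language for exceptions `L_excore`.
Types are elements of `Ty`, with a distinguished type `Par` of parameters and an
empty type `Emp` (written `0` in the paper); `Sig` is a signature of pure operations.
`tag : Par → Emp` is a propagator and `untag : Emp → Par` is a catcher. -/

inductive CoTm (Ty : Type) (Par Emp : Ty) (Sig : Ty → Ty → Type) : Ty → Ty → Type where
  | id (X : Ty) : CoTm Ty Par Emp Sig X X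
  | comp {X Y Z : Ty} (g : CoTm Ty Par Emp Sig Y Z) (f : CoTm Ty Par Emp Sig X Y) :
      CoTm Ty Par Emp Sig X Z
  | gen {X Y : Ty} (s : Sig X Y) : CoTm Ty Par Emp Sig X Y
  | fromEmpty (Y : Ty) : CoTm Ty Par Emp Sig Emp Y
  | tag : CoTm Ty Par Emp Sig Par Emp
  | untag : CoTm Ty Par Emp Sig Emp Par

variable {Ty : Type} {Par Emp : Ty} {Sig : Ty → Ty → Type}

/-- The pure terms of `L_excore`. -/
inductive CoPure : ∀ {X Y : Ty}, CoTm Ty Par Emp Sig X Y → Prop where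
  | id (X : Ty) : CoPure (CoTm.id X)
  | comp {X Y Z : Ty} {g : CoTm Ty Par Emp Sig Y Z} {f : CoTm Ty Par Emp Sig X Y} :
      CoPure g → CoPure f → CoPure (CoTm.comp g f)
  | gen {X Y : Ty} (s : Sig X Y) : CoPure (CoTm.gen (Par := Par) (Emp := Emp) s)
  | fromEmpty (Y : Ty) : CoPure (CoTm.fromEmpty (Par := Par) (Sig := Sig) Y)

/-- The propagators of `L_excore`: terms not containing `untag`
(all terms are catchers). -/
inductive CoPpg : ∀ {X Y : Ty}, CoTm Ty Par Emp Sig X Y → Prop where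
  | id (X : Ty) : CoPpg (CoTm.id X)
  | comp {X Y Z : Ty} {g : CoTm Ty Par Emp Sig Y Z} {f : CoTm Ty Par Emp Sig X Y} :
      CoPpg g → CoPpg f → CoPpg (CoTm.comp g f)
  | gen {X Y : Ty} (s : Sig X Y) : CoPpg (CoTm.gen (Par := Par) (Emp := Emp) s)
  | fromEmpty (Y : Ty) : CoPpg (CoTm.fromEmpty (Par := Par) (Sig := Sig) Y)
  | tag : CoPpg (CoTm.tag (Sig := Sig))

/-- A decorated equation of `L_excore`: a pair of parallel terms together with a
`Bool` which is `true` for a strong equation `≡` and `false` for a weak equation `∼`. -/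
def CoEqn (Ty : Type) (Par Emp : Ty) (Sig : Ty → Ty → Type) : Type :=
  Σ X : Ty, Σ Y : Ty, (CoTm Ty Par Emp Sig X Y × CoTm Ty Par Emp Sig X Y) × Bool

mutual
/-- Derivable strong equations of `L_excore` from the axiom set `Ax`. -/
inductive CoSEq (Ax : Set (CoEqn Ty Par Emp Sig)) :
    ∀ {X Y : Ty}, CoTm Ty Par Emp Sig X Y → CoTm Ty Par Emp Sig X Y → Prop where
  | ax {X Y : Ty} {f g : CoTm Ty Par Emp Sig X Y} :
      (⟨X, Y, (f, g), true⟩ : CoEqn Ty Par Emp Sig) ∈ Ax → CoSEq Ax f g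
  | refl {X Y : Ty} (f : CoTm Ty Par Emp Sig X Y) : CoSEq Ax f f
  | symm {X Y : Ty} {f g : CoTm Ty Par Emp Sig X Y} : CoSEq Ax f g → CoSEq Ax g f
  | trans {X Y : Ty} {f g h : CoTm Ty Par Emp Sig X Y} :
      CoSEq Ax f g → CoSEq Ax g h → CoSEq Ax f h
  | subs {X Y Z : Ty} (u : CoTm Ty Par Emp Sig X Y) {v₁ v₂ : CoTm Ty Par Emp Sig Y Z} :
      CoSEq Ax v₁ v₂ → CoSEq Ax (v₁.comp u) (v₂.comp u)
  | repl {X Y Z : Ty} {v₁ v₂ : CoTm Ty Par Emp Sig X Y} (w : CoTm Ty Par Emp Sig Y Z) :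
      CoSEq Ax v₁ v₂ → CoSEq Ax (w.comp v₁) (w.comp v₂)
  | idLeft {X Y : Ty} (f : CoTm Ty Par Emp Sig X Y) : CoSEq Ax ((CoTm.id Y).comp f) f
  | idRight {X Y : Ty} (f : CoTm Ty Par Emp Sig X Y) : CoSEq Ax (f.comp (CoTm.id X)) f
  | assoc {W X Y Z : Ty} (h : CoTm Ty Par Emp Sig Y Z) (g : CoTm Ty Par Emp Sig X Y)
      (f : CoTm Ty Par Emp Sig W X) : CoSEq Ax ((h.comp g).comp f) (h.comp (g.comp f))
  -- (initial) of the pure sublogic `L_eqn`: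
  | initialPure {Y : Ty} {u : CoTm Ty Par Emp Sig Emp Y} :
      CoPure u → CoSEq Ax u (CoTm.fromEmpty Y)
  -- (eq₁): a weak equation between propagators is strong
  | eq₁ {X Y : Ty} {f g : CoTm Ty Par Emp Sig X Y} :
      CoPpg f → CoPpg g → CoWEq Ax f g → CoSEq Ax f g
  -- (eq₂)
  | eq₂ {X Y : Ty} {f g : CoTm Ty Par Emp Sig X Y} :
      CoWEq Ax f g → CoSEq Ax (f.comp (CoTm.fromEmpty X)) (g.comp (CoTm.fromEmpty X)) →
      CoSEq Ax f g
  -- (eq₃)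
  | eq₃ {X : Ty} {f g : CoTm Ty Par Emp Sig Emp X} :
      CoWEq Ax (f.comp CoTm.tag) (g.comp CoTm.tag) → CoSEq Ax f g

/-- Derivable weak equations of `L_excore` from the axiom set `Ax`. -/
inductive CoWEq (Ax : Set (CoEqn Ty Par Emp Sig)) :
    ∀ {X Y : Ty}, CoTm Ty Par Emp Sig X Y → CoTm Ty Par Emp Sig X Y → Prop where
  | ax {X Y : Ty} {f g : CoTm Ty Par Emp Sig X Y} :
      (⟨X, Y, (f, g), false⟩ : CoEqn Ty Par Emp Sig) ∈ Ax → CoWEq Ax f g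
  | symm {X Y : Ty} {f g : CoTm Ty Par Emp Sig X Y} : CoWEq Ax f g → CoWEq Ax g f
  | trans {X Y : Ty} {f g h : CoTm Ty Par Emp Sig X Y} :
      CoWEq Ax f g → CoWEq Ax g h → CoWEq Ax f h
  -- (subs_∼): substitution only by pure terms
  | subsPure {X Y Z : Ty} {u : CoTm Ty Par Emp Sig X Y} {v₁ v₂ : CoTm Ty Par Emp Sig Y Z} :
      CoPure u → CoWEq Ax v₁ v₂ → CoWEq Ax (v₁.comp u) (v₂.comp u)
  -- (repl_∼): replacement by arbitrary terms
  | repl {X Y Z : Ty} {v₁ v₂ : CoTm Ty Par Emp Sig X Y} (w : CoTm Ty Par Emp Sig Y Z) :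
      CoWEq Ax v₁ v₂ → CoWEq Ax (w.comp v₁) (w.comp v₂)
  -- (empty_∼)
  | empty {Y : Ty} (f : CoTm Ty Par Emp Sig Emp Y) : CoWEq Ax f (CoTm.fromEmpty Y)
  -- (≡-to-∼)
  | ofStrong {X Y : Ty} {f g : CoTm Ty Par Emp Sig X Y} : CoSEq Ax f g → CoWEq Ax f g
  -- (ax): untag ∘ tag ∼ id_P
  | untag_tag : CoWEq Ax ((CoTm.untag (Sig := Sig)).comp CoTm.tag) (CoTm.id Par)
end

/-- Two sets of decorated equations are `T_excore`-equivalent over `Ax` when they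
generate the same theory (same strong and weak theorems) over `Ax`. -/
def CoEquiv (Ax E₁ E₂ : Set (CoEqn Ty Par Emp Sig)) : Prop :=
  ∀ (X Y : Ty) (f g : CoTm Ty Par Emp Sig X Y),
    (CoSEq (Ax ∪ E₁) f g ↔ CoSEq (Ax ∪ E₂) f g) ∧
    (CoWEq (Ax ∪ E₁) f g ↔ CoWEq (Ax ∪ E₂) f g)

/-- `Ax` is a pure (strong) theory: all axioms are strong equations between pure terms. -/
def CoPureAx (Ax : Set (CoEqn Ty Par Emp Sig)) : Prop :=
  ∀ e ∈ Ax, CoPure e.2.2.1.1 ∧ CoPure e.2.2.1.2 ∧ e.2.2.2 = true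

/-- Any propagator out of the empty type is strongly equal to `[]`. -/
lemma coexc_ppg_emp_eq {Ax : Set (CoEqn Ty Par Emp Sig)} {Y : Ty}
    {b : CoTm Ty Par Emp Sig Emp Y} (hb : CoPpg b) :
    CoSEq Ax b (CoTm.fromEmpty Y) :=
  CoSEq.eq₁ hb (CoPpg.fromEmpty Y) (CoWEq.empty b)

lemma coexc_fromEmpty_id {Ax : Set (CoEqn Ty Par Emp Sig)} :
    CoSEq Ax (CoTm.fromEmpty (Par := Par) (Sig := Sig) Emp) (CoTm.id Emp) :=
  (CoSEq.initialPure (CoPure.id Emp)).symm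

/-- In `L_excore`, every propagator `a : X → Y` is provably strongly equal
either to a pure term, or to `[]_Y ∘ tag ∘ v` for a pure `v : X → P`; moreover every
propagator `a : X → 0` is strongly equal to `tag ∘ v` for some pure `v : X → P`. -/
theorem coexc_canonical_form_ppg (Ax : Set (CoEqn Ty Par Emp Sig)) (hAx : CoPureAx Ax) :
    (∀ {X Y : Ty} (a : CoTm Ty Par Emp Sig X Y), CoPpg a →
      (∃ u : CoTm Ty Par Emp Sig X Y, CoPure u ∧ CoSEq Ax a u) ∨
      (∃ v : CoTm Ty Par Emp Sig X Par, CoPure v ∧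
        CoSEq Ax a ((CoTm.fromEmpty Y).comp (CoTm.tag.comp v)))) ∧
    (∀ {X : Ty} (a : CoTm Ty Par Emp Sig X Emp), CoPpg a →
      ∃ v : CoTm Ty Par Emp Sig X Par, CoPure v ∧ CoSEq Ax a (CoTm.tag.comp v)) := by
  have key : ∀ {X Y : Ty} (a : CoTm Ty Par Emp Sig X Y), CoPpg a →
      (∃ u : CoTm Ty Par Emp Sig X Y, CoPure u ∧ CoSEq Ax a u) ∨
      (∃ v : CoTm Ty Par Emp Sig X Par, CoPure v ∧
        CoSEq Ax a ((CoTm.fromEmpty Y).comp (CoTm.tag.comp v))) := by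
    intro X Y a ha
    induction ha with
    | id X => exact Or.inl ⟨_, CoPure.id X, CoSEq.refl _⟩
    | gen s => exact Or.inl ⟨_, CoPure.gen s, CoSEq.refl _⟩
    | fromEmpty Y => exact Or.inl ⟨_, CoPure.fromEmpty Y, CoSEq.refl _⟩
    | tag =>
      refine Or.inr ⟨CoTm.id Par, CoPure.id Par, CoSEq.symm ?_⟩
      exact ((CoSEq.subs _ coexc_fromEmpty_id).trans
        (CoSEq.idLeft _)).trans (CoSEq.idRight _)
    | @comp X Y Z g f hg hf ihg ihf =>
      rcases ihf with ⟨u, hu, hfu⟩ | ⟨v, hv, hfv⟩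
      · rcases ihg with ⟨w, hw, hgw⟩ | ⟨v, hv, hgv⟩
        · refine Or.inl ⟨w.comp u, CoPure.comp hw hu, ?_⟩
          exact (CoSEq.repl g hfu).trans (CoSEq.subs u hgw)
        · refine Or.inr ⟨v.comp u, CoPure.comp hv hu, ?_⟩
          exact (((CoSEq.repl g hfu).trans (CoSEq.subs u hgv)).trans
            (CoSEq.assoc _ _ _)).trans (CoSEq.repl _ (CoSEq.assoc _ _ _))
      · refine Or.inr ⟨v, hv, ?_⟩
        exact ((CoSEq.repl g hfv).trans (CoSEq.assoc _ _ _).symm).trans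
          (CoSEq.subs _ (coexc_ppg_emp_eq (CoPpg.comp hg (CoPpg.fromEmpty Y))))
  refine ⟨fun a ha => key a ha, fun {X} a ha => ?_⟩
  rcases key a ha with ⟨u, hu, hau⟩ | ⟨v, hv, hav⟩
  · refine ⟨(CoTm.fromEmpty Par).comp u, CoPure.comp (CoPure.fromEmpty Par) hu, ?_⟩
    refine hau.trans (CoSEq.symm ?_)
    exact ((((CoSEq.assoc _ _ _).symm.trans
      (CoSEq.subs _ (coexc_ppg_emp_eq (CoPpg.comp CoPpg.tag (CoPpg.fromEmpty Par))))).trans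
      (CoSEq.subs _ coexc_fromEmpty_id)).trans (CoSEq.idLeft _))
  · refine ⟨v, hv, hav.trans ?_⟩
    exact (CoSEq.subs _ coexc_fromEmpty_id).trans (CoSEq.idLeft _)
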